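/- Let k ≥ 2 and let m, m_1, …, m_k be positive integers. If e_{k-1}^{2m} ∉ (x_1^{m_1},…,x_{k-1}^{m_{k-1}}) in F_2[x_1,…,x_{k-1}] and m_k ≥ m + 1, then e_k^m ∉ (x_1^{m_1},…,x_k^{m_k}) in F_2[x_1,…,x_k]. -/

import Mathlib

open MvPolynomial

/-- The top Dickson polynomial `e_k = ∏_{0 ≠ α ∈ F_2^k} (α_1 x_1 + ⋯ + α_k x_k)`
in `F_2[x_1,…,x_k]`. -/
noncomputable def ek (k : ℕ) : MvPolynomial (Fin k) (ZMod 2) :=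
  ∏ α ∈ Finset.univ.filter (fun α : Fin k → ZMod 2 => α ≠ 0),
    ∑ i, C (α i) * X i

namespace Stmt3Aux

noncomputable def lin {n : ℕ} (β : Fin n → ZMod 2) : MvPolynomial (Fin n) (ZMod 2) :=
  ∑ i, C (β i) * X i

lemma ek_eq (n : ℕ) :
    ek n = ∏ β ∈ Finset.univ.filter (fun β : Fin n → ZMod 2 => β ≠ 0), lin β := rfl

lemma lin_zero (n : ℕ) : lin (0 : Fin n → ZMod 2) = 0 := by
  simp [lin]

lemma zmod2_eq_one {a : ZMod 2} (h : a ≠ 0) : a = 1 := by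
  revert h; revert a; decide

lemma snoc_eq_zero_iff {n : ℕ} (β : Fin n → ZMod 2) (c : ZMod 2) :
    (Fin.snoc β c : Fin (n + 1) → ZMod 2) = 0 ↔ β = 0 ∧ c = 0 := by
  constructor
  · intro h
    refine ⟨funext fun j => ?_, ?_⟩
    · have := congrFun h j.castSucc; simpa using this
    · have := congrFun h (Fin.last n); simpa using this
  · rintro ⟨rfl, rfl⟩
    funext j
    induction j using Fin.lastCases <;> simp

noncomputable def Φ (n : ℕ) :
    MvPolynomial (Fin (n + 1)) (ZMod 2) →ₐ[ZMod 2]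
      Polynomial (MvPolynomial (Fin n) (ZMod 2)) :=
  (MvPolynomial.finSuccEquiv (ZMod 2) n).toAlgHom.comp (rename (finRotate (n + 1)))

lemma Φ_X_last (n : ℕ) : Φ n (X (Fin.last n)) = Polynomial.X := by
  simp [Φ, finRotate_last, finSuccEquiv_X_zero]

lemma Φ_X_castSucc {n : ℕ} (i : Fin n) : Φ n (X i.castSucc) = Polynomial.C (X i) := by
  simp [Φ, finRotate_succ_apply, Fin.coeSucc_eq_succ, finSuccEquiv_X_succ]

lemma Φ_C {n : ℕ} (a : ZMod 2) : Φ n (C a) = Polynomial.C (C a) := by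
  simp [Φ, finSuccEquiv_apply]

lemma Φ_lin {n : ℕ} (β : Fin n → ZMod 2) (c : ZMod 2) :
    Φ n (∑ i, C ((Fin.snoc β c : Fin (n + 1) → ZMod 2) i) * X i)
      = Polynomial.C (lin β) + Polynomial.C (C c) * Polynomial.X := by
  rw [map_sum, Fin.sum_univ_castSucc]
  simp only [map_mul, Φ_C, Φ_X_castSucc, Φ_X_last, Fin.snoc_castSucc, Fin.snoc_last]
  congr 1
  rw [lin, map_sum]
  simp [Polynomial.C_mul]

lemma Φ_ek (n : ℕ) :
    Φ n (ek (n + 1)) = Polynomial.C (ek n) * (Polynomial.X *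
      ∏ β ∈ Finset.univ.filter (fun β : Fin n → ZMod 2 => β ≠ 0),
        (Polynomial.C (lin β) + Polynomial.X)) := by
  rw [ek, map_prod]
  rw [← Finset.prod_filter_mul_prod_filter_not
      (Finset.univ.filter (fun α : Fin (n + 1) → ZMod 2 => α ≠ 0))
      (fun α => α (Fin.last n) = 0)
      (fun α => Φ n (∑ i, C (α i) * X i))]
  congr 1
  · -- α_last = 0 part equals C (ek n)
    rw [ek_eq, map_prod]
    refine Finset.prod_bij' (fun α _ => Fin.init α) (fun β _ => Fin.snoc β 0)
      ?_ ?_ ?_ ?_ ?_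
    · intro α hα
      simp only [Finset.mem_filter, Finset.mem_univ, true_and] at hα ⊢
      intro h0
      apply hα.1
      rw [← Fin.snoc_init_self α, h0, hα.2, (snoc_eq_zero_iff _ _)]
      exact ⟨rfl, rfl⟩
    · intro β hβ
      simp only [Finset.mem_filter, Finset.mem_univ, true_and] at hβ ⊢
      refine ⟨fun h0 => hβ ((snoc_eq_zero_iff _ _).mp h0).1, by simp⟩
    · intro α hα
      simp only [Finset.mem_filter, Finset.mem_univ, true_and] at hα
      show (Fin.snoc (Fin.init α) 0 : Fin (n + 1) → ZMod 2) = α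
      rw [← hα.2]
      exact Fin.snoc_init_self α
    · intro β _
      exact Fin.init_snoc _ _
    · intro α hα
      simp only [Finset.mem_filter, Finset.mem_univ, true_and] at hα
      show Φ n (∑ i, C (α i) * X i) = Polynomial.C (lin (Fin.init α))
      conv_lhs => rw [← Fin.snoc_init_self α, hα.2]
      rw [Φ_lin]
      simp
  · -- α_last = 1 part
    have : ∏ α ∈ (Finset.univ.filter (fun α : Fin (n + 1) → ZMod 2 => α ≠ 0)).filter
        (fun α => ¬ α (Fin.last n) = 0), Φ n (∑ i, C (α i) * X i)
        = ∏ β : Fin n → ZMod 2, (Polynomial.C (lin β) + Polynomial.X) := by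
      refine Finset.prod_bij' (fun α _ => Fin.init α) (fun β _ => Fin.snoc β 1)
        ?_ ?_ ?_ ?_ ?_
      · intro α _; exact Finset.mem_univ _
      · intro β _
        simp only [Finset.mem_filter, Finset.mem_univ, true_and]
        constructor
        · intro h0
          exact one_ne_zero ((snoc_eq_zero_iff _ _).mp h0).2
        · simp
      · intro α hα
        simp only [Finset.mem_filter, Finset.mem_univ, true_and] at hα
        show (Fin.snoc (Fin.init α) 1 : Fin (n + 1) → ZMod 2) = α
        rw [← zmod2_eq_one hα.2]
        exact Fin.snoc_init_self α
      · intro β _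
        exact Fin.init_snoc _ _
      · intro α hα
        simp only [Finset.mem_filter, Finset.mem_univ, true_and] at hα
        show Φ n (∑ i, C (α i) * X i) = Polynomial.C (lin (Fin.init α)) + Polynomial.X
        conv_lhs => rw [← Fin.snoc_init_self α, zmod2_eq_one hα.2]
        rw [Φ_lin]
        simp
    rw [this, ← Finset.mul_prod_erase Finset.univ _
        (Finset.mem_univ (0 : Fin n → ZMod 2)), lin_zero, ← Finset.filter_ne']
    simp

lemma coeff_Φ_pow (n m : ℕ) :
    (Φ n (ek (n + 1) ^ m)).coeff m = ek n ^ (2 * m) := by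
  set H := ∏ β ∈ Finset.univ.filter (fun β : Fin n → ZMod 2 => β ≠ 0),
    (Polynomial.C (lin β) + Polynomial.X) with hH
  have hH0 : Polynomial.constantCoeff H = ek n := by
    rw [hH, map_prod, ek_eq]
    refine Finset.prod_congr rfl fun β _ => ?_
    simp [lin]
  rw [map_pow, Φ_ek, mul_pow, mul_pow]
  have e1 : Polynomial.C (ek n) ^ m * (Polynomial.X ^ m * H ^ m)
      = Polynomial.X ^ m * (Polynomial.C (ek n) ^ m * H ^ m) := by ring
  rw [e1]
  have e2 := Polynomial.coeff_X_pow_mul (Polynomial.C (ek n) ^ m * H ^ m) m 0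
  rw [zero_add] at e2
  rw [e2]
  show Polynomial.constantCoeff (Polynomial.C (ek n) ^ m * H ^ m) = _
  have hc : Polynomial.constantCoeff (Polynomial.C (ek n)) = ek n := Polynomial.coeff_C_zero
  rw [map_mul, map_pow, map_pow, hc, hH0, two_mul, pow_add]

end Stmt3Aux

open Stmt3Aux in
theorem stmt3 (k : ℕ) (hk : 2 ≤ k) (m : ℕ) (hm : 0 < m)
    (mv : Fin k → ℕ) (hmvpos : ∀ i, 0 < mv i)
    (h1 : ek (k - 1) ^ (2 * m) ∉
        Ideal.span (Set.range fun i : Fin (k - 1) =>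
          (X i : MvPolynomial (Fin (k - 1)) (ZMod 2)) ^ mv (Fin.castLE (Nat.sub_le k 1) i)))
    (h2 : m + 1 ≤ mv ⟨k - 1, by omega⟩) :
    ek k ^ m ∉ Ideal.span (Set.range fun i : Fin k => X i ^ mv i) := by
  obtain ⟨n, rfl⟩ : ∃ n, k = n + 1 := ⟨k - 1, by omega⟩
  intro hmem
  apply h1
  have h2' : m + 1 ≤ mv (Fin.last n) := h2
  set J : Ideal (MvPolynomial (Fin n) (ZMod 2)) :=
    Ideal.span (Set.range fun i : Fin n =>
      (X i : MvPolynomial (Fin n) (ZMod 2)) ^ mv i.castSucc) with hJ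
  have h3 : Φ n (ek (n + 1) ^ m) ∈
      Ideal.span (Set.range fun i : Fin (n + 1) => (Φ n (X i)) ^ mv i) := by
    have h4 := Ideal.mem_map_of_mem ((Φ n).toRingHom) hmem
    rw [Ideal.map_span, ← Set.range_comp] at h4
    convert h4 using 3
    funext i
    simp [Function.comp, map_pow]
    rfl
  have key : ∀ j, j ≤ m → (Φ n (ek (n + 1) ^ m)).coeff j ∈ J := by
    refine Submodule.span_induction
      (p := fun x _ => ∀ j, j ≤ m → Polynomial.coeff x j ∈ J) ?_ ?_ ?_ ?_ h3
    · have gen : ∀ i : Fin (n + 1), ∀ j, j ≤ m →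
          Polynomial.coeff ((Φ n (X i)) ^ mv i) j ∈ J := by
        intro i
        induction i using Fin.lastCases with
        | last =>
          rw [Φ_X_last]
          intro j hj
          rw [Polynomial.coeff_X_pow]
          have hne : j ≠ mv (Fin.last n) := by omega
          simp [hne]
        | cast i =>
          rw [Φ_X_castSucc, ← map_pow]
          intro j hj
          rw [Polynomial.coeff_C]
          split
          · exact Ideal.subset_span ⟨i, rfl⟩
          · exact J.zero_mem
      rintro x ⟨i, rfl⟩
      exact gen i
    · intro j hj; simp
    · intro x y _ _ hx hy j hj
      rw [Polynomial.coeff_add]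
      exact J.add_mem (hx j hj) (hy j hj)
    · intro r x _ hx j hj
      rw [smul_eq_mul, Polynomial.coeff_mul]
      refine Ideal.sum_mem _ ?_
      rintro ⟨a, b⟩ hab
      rw [Finset.HasAntidiagonal.mem_antidiagonal] at hab
      exact J.mul_mem_left _ (hx b (by omega))
  have final := key m le_rfl
  rw [coeff_Φ_pow] at final
  exact final
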